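/- For every even integer d ≥ 4, the vectors of the set U_d^even = (⋃_{k=0}^{(d−4)/2} C^{(d,d−2k)}) ∪ A^{(d,0)} ∪ {S_d} in ℂ^(Fin d × Fin d × Fin d) are pairwise orthogonal and each is nonzero, and the set U_d^even has exactly d³ − 4d + 8 elements. -/

import Mathlib

open scoped ComplexOrder

noncomputable section

/-- the standard basis vector e_a of ℂ^d (indexed by a natural number `a`;
it is the zero vector when `a ≥ d`). -/
def eV (d : ℕ) (a : ℕ) : Fin d → ℂ := fun k => if (k : ℕ) = a then 1 else 0

/-- ω_m = exp(2πi/m) -/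
def wN (m : ℕ) : ℂ := Complex.exp (2 * Real.pi * Complex.I / m)

/-- η_i^{(d−2k)} = Σ_{t=k}^{d−2−k} ω_{d−1−2k}^{i(t−k)} e_t -/
def etaG (d k i : ℕ) : Fin d → ℂ :=
  fun a => ∑ t ∈ Finset.Icc k (d - 2 - k), wN (d - 1 - 2 * k) ^ (i * (t - k)) * eV d t a

/-- ξ_j^{(d−2k)} = Σ_{t=k}^{d−2−k} ω_{d−1−2k}^{j(t−k)} e_{t+1} -/
def xiG (d k j : ℕ) : Fin d → ℂ :=
  fun a => ∑ t ∈ Finset.Icc k (d - 2 - k), wN (d - 1 - 2 * k) ^ (j * (t - k)) * eV d (t + 1) a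

/-- the product vector u ⊗ v ⊗ w -/
def tpv (d : ℕ) (u v w : Fin d → ℂ) : Fin d × Fin d × Fin d → ℂ :=
  fun p => u p.1 * v p.2.1 * w p.2.2

/-- the stopper state S_d = (Σ e_i) ⊗ (Σ e_j) ⊗ (Σ e_k) -/
def stopD (d : ℕ) : Fin d × Fin d × Fin d → ℂ :=
  tpv d (fun a => ∑ i ∈ Finset.range d, eV d i a)
    (fun a => ∑ i ∈ Finset.range d, eV d i a)
    (fun a => ∑ i ∈ Finset.range d, eV d i a)

/-- the set C^{(d,d−2k)}, the union of the six families A₁, A₂, A₃, B₁, B₂, B₃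
indexed by (i,j) ∈ ℤ_{d−1−2k} × ℤ_{d−1−2k} \ {(0,0)} -/
def Cset (d k : ℕ) : Set (Fin d × Fin d × Fin d → ℂ) :=
  {x | ∃ i j : ℕ, i < d - 1 - 2 * k ∧ j < d - 1 - 2 * k ∧ ¬(i = 0 ∧ j = 0) ∧
      (x = tpv d (xiG d k j) (eV d k) (etaG d k i) ∨
       x = tpv d (xiG d k j) (etaG d k i) (eV d (d - 1 - k)) ∨
       x = tpv d (eV d (d - 1 - k)) (xiG d k j) (etaG d k i) ∨
       x = tpv d (etaG d k i) (eV d (d - 1 - k)) (xiG d k j) ∨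
       x = tpv d (etaG d k i) (xiG d k j) (eV d k) ∨
       x = tpv d (eV d k) (etaG d k i) (xiG d k j))}

/-- with φ_i = e_{(d−2)/2} + (−1)^i e_{d/2}, the set
A^{(d,0)} = { φ_r ⊗ φ_s ⊗ φ_t : (r,s,t) ≠ (0,0,0) } (for even d) -/
def phiE (d i : ℕ) : Fin d → ℂ :=
  fun a => eV d ((d - 2) / 2) a + (-1 : ℂ) ^ i * eV d (d / 2) a

def A0set (d : ℕ) : Set (Fin d × Fin d × Fin d → ℂ) :=
  {x | ∃ r s t : ℕ, r < 2 ∧ s < 2 ∧ t < 2 ∧ ¬(r = 0 ∧ s = 0 ∧ t = 0) ∧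
      x = tpv d (phiE d r) (phiE d s) (phiE d t)}

/-- U_d^odd = (⋃_{k=0}^{(d−3)/2} C^{(d,d−2k)}) ∪ {S_d} -/
def Uodd (d : ℕ) : Set (Fin d × Fin d × Fin d → ℂ) :=
  {x | ∃ k ≤ (d - 3) / 2, x ∈ Cset d k} ∪ {stopD d}

/-- U_d^even = (⋃_{k=0}^{(d−4)/2} C^{(d,d−2k)}) ∪ A^{(d,0)} ∪ {S_d} -/
def Ueven (d : ℕ) : Set (Fin d × Fin d × Fin d → ℂ) :=
  {x | ∃ k ≤ (d - 4) / 2, x ∈ Cset d k} ∪ A0set d ∪ {stopD d}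

/-- the standard Hermitian inner product on ℂ^(Fin d × Fin d × Fin d) -/
def inpD (d : ℕ) (x y : Fin d × Fin d × Fin d → ℂ) : ℂ :=
  ∑ p, (starRingEnd ℂ) (x p) * y p

/-- Ẽ = I_d ⊗ E acting on ℂ^(Fin d × Fin d × Fin d) -/
def ampBCD (d : ℕ) (E : Matrix (Fin d × Fin d) (Fin d × Fin d) ℂ) :
    Matrix (Fin d × Fin d × Fin d) (Fin d × Fin d × Fin d) ℂ :=
  fun p q => (if p.1 = q.1 then (1 : ℂ) else 0) * E p.2 q.2

/-!
Every factor `e_a`, `η_i`, `ξ_j`, `φ_r` is a discrete Fourier vector `Σ_{t<m} ω_m^{it} e_{o+t}` on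
a block of `m` consecutive coordinates (`m = 1, d-1-2k, d-1-2k, 2`), so every vector of `U_d^even`
other than the stopper is supported on a box. The six families of `C^{(d,d-2k)}` sit on six
pairwise disjoint tiles on the boundary of the cube `[k, d-1-k]³`, and `A^{(d,0)}` sits on the
central `2 × 2 × 2` cube. Vectors on different boxes are orthogonal because their supports are
disjoint, vectors on the same box by the orthogonality of the characters of `ℤ_m`, and the stopper
is orthogonal to all of them because each has a factor of nonzero frequency, whose entries sum to
zero. Nonzero pairwise orthogonal vectors are distinct, so
`|U_d^even| = Σ_k 6((d-1-2k)² - 1) + 7 + 1 = d³ - 4d + 8`.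
-/

namespace UevenUPB

open Finset

section InnerProduct

variable {d : ℕ}

lemma inpD_tpv (u v w u' v' w' : Fin d → ℂ) :
    inpD d (tpv d u v w) (tpv d u' v' w') =
      (star u ⬝ᵥ u') * (star v ⬝ᵥ v') * (star w ⬝ᵥ w') := by
  have hterm : ∀ p : Fin d × Fin d × Fin d, star (tpv d u v w p) * tpv d u' v' w' p =
      (star (u p.1) * u' p.1) * (star (v p.2.1) * v' p.2.1) * (star (w p.2.2) * w' p.2.2) :=
    fun p => by simp only [tpv, star_mul']; ring
  simp only [inpD, ← Complex.star_def, hterm, Fintype.sum_prod_type, dotProduct, Pi.star_apply,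
    ← Finset.mul_sum, ← Finset.sum_mul]

lemma inpD_conj_symm (x y : Fin d × Fin d × Fin d → ℂ) : star (inpD d x y) = inpD d y x := by
  simp only [inpD, star_sum, star_mul', Complex.star_def, Complex.conj_conj, mul_comm]

lemma inpD_self_eq_zero_iff {x : Fin d × Fin d × Fin d → ℂ} : inpD d x x = 0 ↔ x = 0 :=
  dotProduct_star_self_eq_zero

lemma inpD_eq_zero_of_disjoint {x y : Fin d × Fin d × Fin d → ℂ} (h : ∀ p, x p ≠ 0 → y p = 0) :
    inpD d x y = 0 :=
  Finset.sum_eq_zero fun p _ => by by_cases hx : x p = 0 <;> simp [hx, h p]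

lemma tpv_apply_ne_zero_iff {u v w : Fin d → ℂ} {p : Fin d × Fin d × Fin d} :
    tpv d u v w p ≠ 0 ↔ u p.1 ≠ 0 ∧ v p.2.1 ≠ 0 ∧ w p.2.2 ≠ 0 := by
  simp only [tpv, ne_eq, mul_eq_zero, not_or, and_assoc]

end InnerProduct

structure IsOrthogonalSet (d : ℕ) (U : Set (Fin d × Fin d × Fin d → ℂ)) : Prop where
  ne_zero : ∀ x ∈ U, x ≠ 0
  inpD_eq_zero : ∀ x ∈ U, ∀ y ∈ U, x ≠ y → inpD d x y = 0

namespace IsOrthogonalSet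

variable {d : ℕ} {U V : Set (Fin d × Fin d × Fin d → ℂ)}

lemma union (hU : IsOrthogonalSet d U) (hV : IsOrthogonalSet d V)
    (hUV : ∀ x ∈ U, ∀ y ∈ V, inpD d x y = 0) : IsOrthogonalSet d (U ∪ V) where
  ne_zero x hx := hx.elim (hU.ne_zero x) (hV.ne_zero x)
  inpD_eq_zero x hx y hy hxy := by
    rcases hx with hx | hx <;> rcases hy with hy | hy
    · exact hU.inpD_eq_zero x hx y hy hxy
    · exact hUV x hx y hy
    · rw [← inpD_conj_symm, hUV y hy x hx, star_zero]
    · exact hV.inpD_eq_zero x hx y hy hxy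

lemma ncard_union (hU : IsOrthogonalSet d U) (hUV : ∀ x ∈ U, ∀ y ∈ V, inpD d x y = 0)
    (hUf : U.Finite) (hVf : V.Finite) : (U ∪ V).ncard = U.ncard + V.ncard := by
  refine Set.ncard_union_eq (Set.disjoint_left.2 fun x hxU hxV => ?_) hUf hVf
  exact hU.ne_zero x hxU (inpD_self_eq_zero_iff.1 (hUV x hxU x hxV))

lemma singleton {x : Fin d × Fin d × Fin d → ℂ} (hx : x ≠ 0) : IsOrthogonalSet d {x} where
  ne_zero _ hy := hy ▸ hx
  inpD_eq_zero _ hy _ hz hyz := absurd (hy.trans hz.symm) hyz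

lemma image {ι : Type*} {s : Set ι} {f : ι → Fin d × Fin d × Fin d → ℂ}
    (hf : ∀ a ∈ s, f a ≠ 0) (horth : ∀ a ∈ s, ∀ b ∈ s, a ≠ b → inpD d (f a) (f b) = 0) :
    IsOrthogonalSet d (f '' s) where
  ne_zero := by
    rintro _ ⟨a, ha, rfl⟩
    exact hf a ha
  inpD_eq_zero := by
    rintro _ ⟨a, ha, rfl⟩ _ ⟨b, hb, rfl⟩ hab
    exact horth a ha b hb fun h => hab (h ▸ rfl)

end IsOrthogonalSet

lemma injOn_of_orthogonal {d : ℕ} {ι : Type*} {s : Set ι} {f : ι → Fin d × Fin d × Fin d → ℂ}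
    (hf : ∀ a ∈ s, f a ≠ 0) (horth : ∀ a ∈ s, ∀ b ∈ s, a ≠ b → inpD d (f a) (f b) = 0) :
    Set.InjOn f s := by
  intro a ha b hb hab
  by_contra hne
  exact hf b hb (inpD_self_eq_zero_iff.1 (hab ▸ horth a ha b hb hne))

lemma geom_sum_eq_ite_of_pow_eq_one {K : Type*} [DivisionRing K] [DecidableEq K] {z : K} {m : ℕ}
    (h : z ^ m = 1) : ∑ t ∈ range m, z ^ t = if z = 1 then (m : K) else 0 := by
  split_ifs with hz
  · simp [hz]
  · rw [geom_sum_eq hz, h, sub_self, zero_div]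

/-- `Σ_{t<m} ω_m^{it} e_{o+t}`, the `i`-th discrete Fourier vector on the coordinates
`o, …, o+m-1`. -/
def fourierBlock (d m o i : ℕ) : Fin d → ℂ :=
  fun a => if o ≤ (a : ℕ) ∧ (a : ℕ) < o + m then wN m ^ (i * ((a : ℕ) - o)) else 0

section FourierBlock

variable {d m o : ℕ}

lemma fourierBlock_apply_ne_zero_iff {i : ℕ} {a : Fin d} :
    fourierBlock d m o i a ≠ 0 ↔ o ≤ (a : ℕ) ∧ (a : ℕ) < o + m := by
  simp [fourierBlock, wN, Complex.exp_ne_zero]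

lemma sum_ite_block (ho : o + m ≤ d) (g : ℕ → ℂ) :
    ∑ a : Fin d, (if o ≤ (a : ℕ) ∧ (a : ℕ) < o + m then g ((a : ℕ) - o) else 0) =
      ∑ t ∈ range m, g t := by
  rw [Fin.sum_univ_eq_sum_range (fun n => if o ≤ n ∧ n < o + m then g (n - o) else 0),
    ← Finset.sum_filter]
  have hfilter : (range d).filter (fun n => o ≤ n ∧ n < o + m) = Ico o (o + m) := by
    ext n
    simp only [mem_filter, mem_range, mem_Ico]
    omega
  rw [hfilter, Finset.sum_Ico_eq_sum_range]
  simp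

lemma star_fourierBlock_dotProduct (ho : o + m ≤ d) {i i' : ℕ} (hi : i < m) (hi' : i' < m) :
    star (fourierBlock d m o i) ⬝ᵥ fourierBlock d m o i' = if i = i' then (m : ℂ) else 0 := by
  have hω : IsPrimitiveRoot (wN m) m := Complex.isPrimitiveRoot_exp m (by omega)
  set z := (wN m ^ i)⁻¹ * wN m ^ i'
  have hterm : ∀ t, star (wN m ^ (i * t)) * wN m ^ (i' * t) = z ^ t := by
    intro t
    rw [Complex.star_def,
      ← Complex.inv_eq_conj (by rw [norm_pow, hω.norm'_eq_one (by omega), one_pow]),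
      mul_pow, inv_pow, ← pow_mul, ← pow_mul, mul_comm i, mul_comm i']
  have hz : z ^ m = 1 := by
    rw [mul_pow, inv_pow, ← pow_mul, ← pow_mul, pow_mul', pow_mul' _ i', hω.pow_eq_one,
      one_pow, one_pow, inv_one, one_mul]
  have hz1 : z = 1 ↔ i = i' := by
    rw [inv_mul_eq_one₀ (pow_ne_zero _ (hω.ne_zero (by omega)))]
    exact ⟨fun h => hω.pow_inj hi hi' h, fun h => h ▸ rfl⟩
  calc star (fourierBlock d m o i) ⬝ᵥ fourierBlock d m o i'
      = ∑ a : Fin d, (if o ≤ (a : ℕ) ∧ (a : ℕ) < o + m then z ^ ((a : ℕ) - o) else 0) := by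
        refine Finset.sum_congr rfl fun a _ => ?_
        simp only [fourierBlock, Pi.star_apply]
        split_ifs
        · exact hterm _
        · simp
    _ = if i = i' then (m : ℂ) else 0 := by
        rw [sum_ite_block ho, geom_sum_eq_ite_of_pow_eq_one hz]
        simp only [hz1]

lemma star_fourierBlock_dotProduct_one (ho : o + m ≤ d) {i : ℕ} (hi : i < m) :
    star (fourierBlock d m o i) ⬝ᵥ 1 = if i = 0 then (m : ℂ) else 0 := by
  rw [← star_fourierBlock_dotProduct ho hi (Nat.zero_lt_of_lt hi)]
  refine Finset.sum_congr rfl fun a _ => ?_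
  simp only [fourierBlock, Pi.star_apply, Pi.one_apply]
  split_ifs <;> simp

lemma star_fourierBlock_unit_dotProduct (ho : o < d) :
    star (fourierBlock d 1 o 0) ⬝ᵥ fourierBlock d 1 o 0 = 1 := by
  simpa using star_fourierBlock_dotProduct (o := o) (by omega) zero_lt_one zero_lt_one

lemma star_fourierBlock_unit_dotProduct_one (ho : o < d) :
    star (fourierBlock d 1 o 0) ⬝ᵥ 1 = 1 := by
  simpa using star_fourierBlock_dotProduct_one (o := o) (by omega) zero_lt_one

end FourierBlock

section FourierBlockForms

variable {d : ℕ}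

lemma eV_eq_fourierBlock (a : ℕ) : eV d a = fourierBlock d 1 a 0 := by
  ext b
  simp only [eV, fourierBlock, zero_mul, pow_zero]
  congr 1
  apply propext
  omega

lemma etaG_eq_fourierBlock {k : ℕ} (hk : 2 * k + 2 ≤ d) (i : ℕ) :
    etaG d k i = fourierBlock d (d - 1 - 2 * k) k i := by
  ext a
  simp only [etaG, eV, mul_ite, mul_one, mul_zero, Finset.sum_ite_eq, mem_Icc, fourierBlock]
  congr 1
  apply propext
  omega

lemma xiG_eq_fourierBlock {k : ℕ} (hk : 2 * k + 2 ≤ d) (j : ℕ) :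
    xiG d k j = fourierBlock d (d - 1 - 2 * k) (k + 1) j := by
  ext a
  simp only [xiG, eV, fourierBlock, mul_ite, mul_one, mul_zero]
  split_ifs with ha
  · rw [Finset.sum_eq_single ((a : ℕ) - 1)]
    · rw [if_pos (by omega), show (a : ℕ) - 1 - k = (a : ℕ) - (k + 1) by omega]
    · intro t _ ht
      exact if_neg (by omega)
    · intro hmem
      simp only [mem_Icc] at hmem
      omega
  · refine Finset.sum_eq_zero fun t ht => if_neg ?_
    simp only [mem_Icc] at ht
    omega

lemma wN_two : wN 2 = -1 := by
  rw [wN, ← Complex.exp_pi_mul_I]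
  congr 1
  push_cast
  ring

lemma phiE_eq_fourierBlock (hd : 2 ≤ d) (he : Even d) (r : ℕ) :
    phiE d r = fourierBlock d 2 ((d - 2) / 2) r := by
  ext a
  obtain ⟨n, rfl⟩ := he
  have hlo : (n + n - 2) / 2 = n - 1 := by omega
  have hhi : (n + n) / 2 = n := by omega
  simp only [phiE, eV, fourierBlock, wN_two, hlo, hhi]
  rcases (show (a : ℕ) = n - 1 ∨ (a : ℕ) = n ∨ ((a : ℕ) ≠ n - 1 ∧ (a : ℕ) ≠ n) by omega)
    with h | h | ⟨h₁, h₂⟩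
  · simp [h, show n - 1 ≠ n by omega]
  · simp [h, show n ≠ n - 1 by omega, show n - (n - 1) = 1 by omega, show n - 1 ≤ n by omega,
      show n < n - 1 + 2 by omega]
  · simp only [h₁, h₂, if_false, mul_zero, add_zero]
    rw [if_neg (by omega)]

lemma stopD_eq : stopD d = tpv d 1 1 1 := by
  have hone : (fun a : Fin d => ∑ i ∈ range d, eV d i a) = 1 := by
    ext a
    simp [eV, a.isLt]
  rw [stopD, hone]

end FourierBlockForms

section Tiles

variable {d : ℕ}

def tileVec (d k : ℕ) (c : Fin 6) (i j : ℕ) : Fin d × Fin d × Fin d → ℂ :=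
  let m := d - 1 - 2 * k
  let η := fourierBlock d m k i
  let ξ := fourierBlock d m (k + 1) j
  let e := fourierBlock d 1 k 0
  let e' := fourierBlock d 1 (d - 1 - k) 0
  ![tpv d ξ e η, tpv d ξ η e', tpv d e' ξ η, tpv d η e' ξ, tpv d η ξ e, tpv d e η ξ] c

lemma Cset_eq {k : ℕ} (hk : 2 * k + 2 ≤ d) :
    Cset d k = {x | ∃ i j, i < d - 1 - 2 * k ∧ j < d - 1 - 2 * k ∧ ¬(i = 0 ∧ j = 0) ∧
      ∃ c, x = tileVec d k c i j} := by
  ext x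
  simp only [Cset, Set.mem_ofPred_eq, Fin.exists_fin_succ, Fin.exists_fin_zero, tileVec,
    etaG_eq_fourierBlock hk, xiG_eq_fourierBlock hk, eV_eq_fourierBlock, Matrix.cons_val_zero,
    Matrix.cons_val_succ, or_false]

lemma tileVec_support_disjoint {k k' : ℕ} (hk : 2 * k + 3 ≤ d) (hk' : 2 * k' + 3 ≤ d)
    {c c' : Fin 6} {i j i' j' : ℕ} {p : Fin d × Fin d × Fin d}
    (h : tileVec d k c i j p ≠ 0) (h' : tileVec d k' c' i' j' p ≠ 0) : k = k' ∧ c = c' := by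
  fin_cases c <;> fin_cases c' <;>
    simp only [tileVec, Fin.zero_eta, Fin.mk_one, Fin.reduceFinMk, Matrix.cons_val,
      tpv_apply_ne_zero_iff, fourierBlock_apply_ne_zero_iff] at h h' <;>
    omega

lemma inpD_tileVec_tileVec {k : ℕ} (hk : 2 * k + 2 ≤ d) (c : Fin 6) {i j i' j' : ℕ}
    (hi : i < d - 1 - 2 * k) (hj : j < d - 1 - 2 * k)
    (hi' : i' < d - 1 - 2 * k) (hj' : j' < d - 1 - 2 * k) :
    inpD d (tileVec d k c i j) (tileVec d k c i' j') =
      (if i = i' then ((d - 1 - 2 * k : ℕ) : ℂ) else 0) *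
        (if j = j' then ((d - 1 - 2 * k : ℕ) : ℂ) else 0) := by
  have hη := star_fourierBlock_dotProduct (d := d) (o := k) (by omega) hi hi'
  have hξ := star_fourierBlock_dotProduct (d := d) (o := k + 1) (by omega) hj hj'
  have he := star_fourierBlock_unit_dotProduct (d := d) (o := k) (by omega)
  have he' := star_fourierBlock_unit_dotProduct (d := d) (o := d - 1 - k) (by omega)
  fin_cases c <;>
    simp only [tileVec, Fin.zero_eta, Fin.mk_one, Fin.reduceFinMk, Matrix.cons_val, inpD_tpv,
      hη, hξ, he, he', one_mul, mul_one] <;>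
    ring

lemma inpD_tileVec_one {k : ℕ} (hk : 2 * k + 2 ≤ d) (c : Fin 6) {i j : ℕ}
    (hi : i < d - 1 - 2 * k) (hj : j < d - 1 - 2 * k) :
    inpD d (tileVec d k c i j) (tpv d 1 1 1) =
      (if i = 0 then ((d - 1 - 2 * k : ℕ) : ℂ) else 0) *
        (if j = 0 then ((d - 1 - 2 * k : ℕ) : ℂ) else 0) := by
  have hη := star_fourierBlock_dotProduct_one (d := d) (o := k) (by omega) hi
  have hξ := star_fourierBlock_dotProduct_one (d := d) (o := k + 1) (by omega) hj
  have he := star_fourierBlock_unit_dotProduct_one (d := d) (o := k) (by omega)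
  have he' := star_fourierBlock_unit_dotProduct_one (d := d) (o := d - 1 - k) (by omega)
  fin_cases c <;>
    simp only [tileVec, Fin.zero_eta, Fin.mk_one, Fin.reduceFinMk, Matrix.cons_val, inpD_tpv,
      hη, hξ, he, he', one_mul, mul_one] <;>
    ring

def tileIndex (d : ℕ) : Finset (Σ _ : ℕ, Fin 6 × ℕ × ℕ) :=
  (range ((d - 4) / 2 + 1)).sigma fun k =>
    univ ×ˢ ((range (d - 1 - 2 * k) ×ˢ range (d - 1 - 2 * k)).erase (0, 0))

def tileFamily (d : ℕ) (a : Σ _ : ℕ, Fin 6 × ℕ × ℕ) : Fin d × Fin d × Fin d → ℂ :=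
  tileVec d a.1 a.2.1 a.2.2.1 a.2.2.2

def tiles (d : ℕ) : Set (Fin d × Fin d × Fin d → ℂ) := tileFamily d '' tileIndex d

lemma mem_tileIndex {k : ℕ} {c : Fin 6} {i j : ℕ} :
    ⟨k, c, i, j⟩ ∈ tileIndex d ↔
      k ≤ (d - 4) / 2 ∧ i < d - 1 - 2 * k ∧ j < d - 1 - 2 * k ∧ ¬(i = 0 ∧ j = 0) := by
  simp only [tileIndex, mem_sigma, mem_range, mem_product, mem_univ, mem_erase, ne_eq,
    Prod.mk.injEq, true_and]
  omega

lemma union_Cset_eq_tiles (hd : 4 ≤ d) : {x | ∃ k ≤ (d - 4) / 2, x ∈ Cset d k} = tiles d := by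
  ext x
  simp only [tiles, tileFamily, Set.mem_image, Finset.mem_coe, Sigma.exists, Prod.exists,
    mem_tileIndex, Set.mem_ofPred_eq]
  constructor
  · rintro ⟨k, hk, hx⟩
    rw [Cset_eq (by omega)] at hx
    obtain ⟨i, j, hi, hj, hij, c, rfl⟩ := hx
    exact ⟨k, c, i, j, ⟨hk, hi, hj, hij⟩, rfl⟩
  · rintro ⟨k, c, i, j, ⟨hk, hi, hj, hij⟩, rfl⟩
    refine ⟨k, hk, ?_⟩
    rw [Cset_eq (by omega)]
    exact ⟨i, j, hi, hj, hij, c, rfl⟩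

lemma tileFamily_ne_zero {a : Σ _ : ℕ, Fin 6 × ℕ × ℕ} (ha : a ∈ tileIndex d) :
    tileFamily d a ≠ 0 := by
  obtain ⟨k, c, i, j⟩ := a
  obtain ⟨-, hi, hj, -⟩ := mem_tileIndex.1 ha
  intro h
  have hself := inpD_self_eq_zero_iff.2 h
  rw [tileFamily, inpD_tileVec_tileVec (by omega) c hi hj hi hj, if_pos rfl, if_pos rfl,
    mul_self_eq_zero, Nat.cast_eq_zero] at hself
  omega

lemma inpD_tileFamily_eq_zero {a b : Σ _ : ℕ, Fin 6 × ℕ × ℕ}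
    (ha : a ∈ tileIndex d) (hb : b ∈ tileIndex d) (hab : a ≠ b) :
    inpD d (tileFamily d a) (tileFamily d b) = 0 := by
  obtain ⟨k, c, i, j⟩ := a
  obtain ⟨k', c', i', j'⟩ := b
  obtain ⟨-, hi, hj, hij⟩ := mem_tileIndex.1 ha
  obtain ⟨-, hi', hj', hij'⟩ := mem_tileIndex.1 hb
  by_cases hkc : k = k' ∧ c = c'
  · obtain ⟨rfl, rfl⟩ := hkc
    rw [tileFamily, tileFamily, inpD_tileVec_tileVec (by omega) c hi hj hi' hj']
    by_cases hii : i = i'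
    · subst hii
      rw [if_neg fun hjj : j = j' => hab (hjj ▸ rfl), mul_zero]
    · rw [if_neg hii, zero_mul]
  · exact inpD_eq_zero_of_disjoint fun p hp => not_not.1 fun hp' =>
      hkc (tileVec_support_disjoint (by omega) (by omega) hp hp')

lemma isOrthogonalSet_tiles : IsOrthogonalSet d (tiles d) :=
  IsOrthogonalSet.image (fun _ ha => tileFamily_ne_zero ha)
    fun _ ha _ hb => inpD_tileFamily_eq_zero ha hb

lemma ncard_tiles : (tiles d).ncard = (tileIndex d).card :=
  (injOn_of_orthogonal (fun _ ha => tileFamily_ne_zero ha)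
    fun _ ha _ hb => inpD_tileFamily_eq_zero ha hb).ncard_image.trans (Set.ncard_coe_finset _)

lemma inpD_tiles_one : ∀ x ∈ tiles d, inpD d x (tpv d 1 1 1) = 0 := by
  rintro _ ⟨⟨k, c, i, j⟩, ha, rfl⟩
  obtain ⟨-, hi, hj, hij⟩ := mem_tileIndex.1 ha
  rw [tileFamily, inpD_tileVec_one (by omega) c hi hj]
  by_cases hi0 : i = 0
  · rw [if_neg fun hj0 => hij ⟨hi0, hj0⟩, mul_zero]
  · rw [if_neg hi0, zero_mul]

lemma sum_six_mul_sq_sub_one_add (m : ℕ) :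
    ∑ k ∈ range m, 6 * ((2 * m + 1 - 2 * k) * (2 * m + 1 - 2 * k) - 1) + 4 * (2 * m + 2) =
      (2 * m + 2) ^ 3 := by
  induction m with
  | zero => norm_num
  | succ m ih =>
    rw [sum_range_succ']
    have hshift : ∀ k ∈ range m, 2 * (m + 1) + 1 - 2 * (k + 1) = 2 * m + 1 - 2 * k :=
      fun k _ => by omega
    have houter :
        (2 * (m + 1) + 1 - 2 * 0) * (2 * (m + 1) + 1 - 2 * 0) - 1 = 4 * m * m + 12 * m + 8 :=
      Nat.sub_eq_of_eq_add (by simp only [Nat.mul_zero, Nat.sub_zero]; ring)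
    rw [sum_congr rfl fun k hk => by rw [hshift k hk], houter]
    nlinarith [ih]

lemma card_tileIndex_add (hd : 4 ≤ d) (he : Even d) : (tileIndex d).card + 4 * d = d ^ 3 := by
  obtain ⟨m, rfl⟩ : ∃ m, d = 2 * m + 2 := ⟨d / 2 - 1, by obtain ⟨n, rfl⟩ := he; omega⟩
  rw [tileIndex, card_sigma, ← sum_six_mul_sq_sub_one_add m,
    show (2 * m + 2 - 4) / 2 + 1 = m by omega]
  congr 1
  refine sum_congr rfl fun k hk => ?_
  rw [mem_range] at hk
  rw [card_product, card_univ, Fintype.card_fin,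
    card_erase_of_mem (by simp only [mem_product, mem_range]; omega), card_product, card_range,
    show 2 * m + 2 - 1 - 2 * k = 2 * m + 1 - 2 * k by omega]

end Tiles

section Corners

variable {d : ℕ}

def cornerVec (d : ℕ) (a : ℕ × ℕ × ℕ) : Fin d × Fin d × Fin d → ℂ :=
  let φ := fourierBlock d 2 ((d - 2) / 2)
  tpv d (φ a.1) (φ a.2.1) (φ a.2.2)

def cornerIndex : Finset (ℕ × ℕ × ℕ) := (range 2 ×ˢ range 2 ×ˢ range 2).erase (0, 0, 0)

def corners (d : ℕ) : Set (Fin d × Fin d × Fin d → ℂ) := cornerVec d '' cornerIndex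

lemma A0set_eq_corners (hd : 2 ≤ d) (he : Even d) : A0set d = corners d := by
  ext x
  simp only [A0set, corners, cornerVec, cornerIndex, phiE_eq_fourierBlock hd he, Set.mem_image,
    Finset.mem_coe, Prod.exists, mem_erase, mem_product, mem_range, ne_eq, Prod.mk.injEq,
    Set.mem_ofPred_eq]
  constructor
  · rintro ⟨r, s, t, hr, hs, ht, hrst, rfl⟩
    exact ⟨r, s, t, ⟨hrst, hr, hs, ht⟩, rfl⟩
  · rintro ⟨r, s, t, ⟨hrst, hr, hs, ht⟩, rfl⟩
    exact ⟨r, s, t, hr, hs, ht, hrst, rfl⟩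

lemma inpD_cornerVec_cornerVec (hd : 2 ≤ d) {r s t r' s' t' : ℕ} (hr : r < 2) (hs : s < 2)
    (ht : t < 2) (hr' : r' < 2) (hs' : s' < 2) (ht' : t' < 2) :
    inpD d (cornerVec d (r, s, t)) (cornerVec d (r', s', t')) =
      (if r = r' then 2 else 0) * (if s = s' then 2 else 0) * (if t = t' then 2 else 0) := by
  have ho : (d - 2) / 2 + 2 ≤ d := by omega
  simp only [cornerVec, inpD_tpv]
  rw [star_fourierBlock_dotProduct ho hr hr', star_fourierBlock_dotProduct ho hs hs',
    star_fourierBlock_dotProduct ho ht ht']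
  norm_num

lemma cornerVec_ne_zero (hd : 2 ≤ d) {a : ℕ × ℕ × ℕ} (ha : a ∈ cornerIndex) :
    cornerVec d a ≠ 0 := by
  obtain ⟨r, s, t⟩ := a
  simp only [cornerIndex, mem_erase, mem_product, mem_range] at ha
  intro h
  have hself := inpD_self_eq_zero_iff.2 h
  rw [inpD_cornerVec_cornerVec hd ha.2.1 ha.2.2.1 ha.2.2.2 ha.2.1 ha.2.2.1 ha.2.2.2] at hself
  norm_num at hself

lemma inpD_cornerVec_eq_zero (hd : 2 ≤ d) {a b : ℕ × ℕ × ℕ} (ha : a ∈ cornerIndex)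
    (hb : b ∈ cornerIndex) (hab : a ≠ b) : inpD d (cornerVec d a) (cornerVec d b) = 0 := by
  obtain ⟨r, s, t⟩ := a
  obtain ⟨r', s', t'⟩ := b
  simp only [cornerIndex, mem_erase, mem_product, mem_range] at ha hb
  rw [inpD_cornerVec_cornerVec hd ha.2.1 ha.2.2.1 ha.2.2.2 hb.2.1 hb.2.2.1 hb.2.2.2]
  simp only [ne_eq, Prod.mk.injEq, not_and_or] at hab
  rcases hab with h | h | h <;> simp [h]

lemma isOrthogonalSet_corners (hd : 2 ≤ d) : IsOrthogonalSet d (corners d) :=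
  IsOrthogonalSet.image (fun _ ha => cornerVec_ne_zero hd ha)
    fun _ ha _ hb => inpD_cornerVec_eq_zero hd ha hb

lemma ncard_corners (hd : 2 ≤ d) : (corners d).ncard = 7 :=
  (injOn_of_orthogonal (fun _ ha => cornerVec_ne_zero hd ha)
    fun _ ha _ hb => inpD_cornerVec_eq_zero hd ha hb).ncard_image.trans
      ((Set.ncard_coe_finset _).trans rfl)

lemma inpD_corners_one (hd : 2 ≤ d) : ∀ x ∈ corners d, inpD d x (tpv d 1 1 1) = 0 := by
  rintro _ ⟨⟨r, s, t⟩, ha, rfl⟩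
  simp only [Finset.mem_coe, cornerIndex, mem_erase, mem_product, mem_range, ne_eq,
    Prod.mk.injEq] at ha
  have ho : (d - 2) / 2 + 2 ≤ d := by omega
  simp only [cornerVec, inpD_tpv]
  rw [star_fourierBlock_dotProduct_one ho ha.2.1, star_fourierBlock_dotProduct_one ho ha.2.2.1,
    star_fourierBlock_dotProduct_one ho ha.2.2.2]
  rcases (show r = 1 ∨ s = 1 ∨ t = 1 by omega) with h | h | h <;> simp [h]

lemma inpD_tiles_corners (hd : 4 ≤ d) : ∀ x ∈ tiles d, ∀ y ∈ corners d, inpD d x y = 0 := by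
  rintro _ ⟨⟨k, c, i, j⟩, ha, rfl⟩ _ ⟨⟨r, s, t⟩, -, rfl⟩
  have hk := (mem_tileIndex.1 ha).1
  refine inpD_eq_zero_of_disjoint fun p hp => not_not.1 fun hp' => ?_
  fin_cases c <;>
    simp only [tileFamily, tileVec, cornerVec, Fin.zero_eta, Fin.mk_one, Fin.reduceFinMk,
      Matrix.cons_val, tpv_apply_ne_zero_iff, fourierBlock_apply_ne_zero_iff] at hp hp' <;>
    omega

end Corners

end UevenUPB

open UevenUPB

/-- For every even d ≥ 4, the vectors of U_d^even are nonzero, pairwise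
orthogonal, and U_d^even has exactly d³ − 4d + 8 elements. -/
theorem Ueven_pairwise_orthogonal_nonzero (d : ℕ) (hd : 4 ≤ d) (heven : Even d) :
    (∀ x ∈ Ueven d, x ≠ 0) ∧
    (∀ x ∈ Ueven d, ∀ y ∈ Ueven d, x ≠ y → inpD d x y = 0) ∧
    (Ueven d).ncard = d ^ 3 - 4 * d + 8 := by
  have hU : Ueven d = (tiles d ∪ corners d) ∪ {tpv d 1 1 1} := by
    rw [Ueven, union_Cset_eq_tiles hd, A0set_eq_corners (by omega) heven, stopD_eq]
  have hTA : IsOrthogonalSet d (tiles d ∪ corners d) :=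
    isOrthogonalSet_tiles.union (isOrthogonalSet_corners (by omega)) (inpD_tiles_corners hd)
  have hS : ∀ x ∈ tiles d ∪ corners d, ∀ y ∈ ({tpv d 1 1 1} : Set _), inpD d x y = 0 := by
    rintro x hx _ rfl
    exact hx.elim (inpD_tiles_one x) (inpD_corners_one (by omega) x)
  have hS0 : tpv d 1 1 1 ≠ 0 := fun h => by
    simpa [tpv] using congrFun h (⟨0, by omega⟩, ⟨0, by omega⟩, ⟨0, by omega⟩)
  have hTf : (tiles d).Finite := (tileIndex d).finite_toSet.image _
  have hAf : (corners d).Finite := cornerIndex.finite_toSet.image _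
  have hUeven : IsOrthogonalSet d (Ueven d) :=
    hU ▸ hTA.union (IsOrthogonalSet.singleton hS0) hS
  refine ⟨hUeven.ne_zero, hUeven.inpD_eq_zero, ?_⟩
  rw [hU, hTA.ncard_union hS (hTf.union hAf) (Set.finite_singleton _),
    isOrthogonalSet_tiles.ncard_union (inpD_tiles_corners hd) hTf hAf,
    ncard_tiles, ncard_corners (by omega), Set.ncard_singleton]
  have := card_tileIndex_add hd heven
  omega
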